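/- arXiv:2210.06925 — 5 statements merged into one kernel-verified Lean document; each statement's English description precedes it below -/
import Mathlib

section
/- For all x, y in R^d and s in R, ⟨x+y⟩^s ≤ (2/√3)^|s| ⟨x⟩^s ⟨y⟩^|s|, where ⟨x⟩ = (1+|x|²)^{1/2}. -/
open Real

/-- The Japanese bracket `⟨x⟩ = (1 + |x|²)^{1/2}`. -/
noncomputable def jbracket {d : ℕ} (x : EuclideanSpace ℝ (Fin d)) : ℝ :=
  (1 + ‖x‖ ^ 2) ^ ((1 : ℝ) / 2)

lemma jb_eq_sqrt {d : ℕ} (x : EuclideanSpace ℝ (Fin d)) :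
    jbracket x = Real.sqrt (1 + ‖x‖ ^ 2) := by
  rw [jbracket, Real.rpow_def_of_pos (by positivity)]
  rw [Real.sqrt_eq_rpow, Real.rpow_def_of_pos (by positivity)]

lemma jb_pos {d : ℕ} (x : EuclideanSpace ℝ (Fin d)) : 0 < jbracket x := by
  rw [jb_eq_sqrt]; positivity

lemma jb_neg {d : ℕ} (y : EuclideanSpace ℝ (Fin d)) : jbracket (-y) = jbracket y := by
  simp [jbracket]

lemma sqrt43 : Real.sqrt (4 / 3) = 2 / Real.sqrt 3 := by
  rw [Real.sqrt_div (by norm_num : (0:ℝ) ≤ 4) 3,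
    show (4:ℝ) = 2 ^ 2 by norm_num, Real.sqrt_sq (by norm_num)]

lemma jb_key {d : ℕ} (x y : EuclideanSpace ℝ (Fin d)) :
    jbracket (x + y) ≤ 2 / Real.sqrt 3 * jbracket x * jbracket y := by
  rw [jb_eq_sqrt, jb_eq_sqrt, jb_eq_sqrt, ← sqrt43,
    ← Real.sqrt_mul (by norm_num), ← Real.sqrt_mul (by positivity)]
  apply Real.sqrt_le_sqrt
  have h : ‖x + y‖ ≤ ‖x‖ + ‖y‖ := norm_add_le x y
  have h2 : ‖x + y‖ ^ 2 ≤ (‖x‖ + ‖y‖) ^ 2 :=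
    pow_le_pow_left₀ (norm_nonneg _) h 2
  nlinarith [sq_nonneg (‖x‖ - ‖y‖), sq_nonneg (1 - 2 * ‖x‖ * ‖y‖)]

/-- Peetre's inequality with optimal constant:
`⟨x+y⟩^s ≤ (2/√3)^{|s|} ⟨x⟩^s ⟨y⟩^{|s|}`. -/
theorem stmt_0 {d : ℕ} (x y : EuclideanSpace ℝ (Fin d)) (s : ℝ) :
    jbracket (x + y) ^ s ≤
      (2 / Real.sqrt 3) ^ |s| * jbracket x ^ s * jbracket y ^ |s| := by
  have hc : (0:ℝ) < 2 / Real.sqrt 3 := by positivity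
  rcases le_or_gt 0 s with hs | hs
  · rw [abs_of_nonneg hs]
    calc jbracket (x + y) ^ s
        ≤ (2 / Real.sqrt 3 * jbracket x * jbracket y) ^ s :=
          Real.rpow_le_rpow (jb_pos _).le (jb_key x y) hs
      _ = (2 / Real.sqrt 3) ^ s * jbracket x ^ s * jbracket y ^ s := by
          rw [Real.mul_rpow (mul_pos hc (jb_pos x)).le (jb_pos y).le,
            Real.mul_rpow hc.le (jb_pos x).le]
  · rw [abs_of_neg hs]
    have key2 : jbracket x ≤ 2 / Real.sqrt 3 * jbracket (x + y) * jbracket y := by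
      have h := jb_key (x + y) (-y)
      simpa [jb_neg] using h
    have h1 : (2 / Real.sqrt 3 * jbracket (x + y) * jbracket y) ^ s ≤ jbracket x ^ s :=
      Real.rpow_le_rpow_of_nonpos (jb_pos x) key2 hs.le
    rw [Real.mul_rpow (mul_pos hc (jb_pos _)).le (jb_pos y).le,
      Real.mul_rpow hc.le (jb_pos _).le] at h1
    rw [Real.rpow_neg hc.le, Real.rpow_neg (jb_pos y).le,
      show ((2 / Real.sqrt 3) ^ s)⁻¹ * jbracket x ^ s * (jbracket y ^ s)⁻¹
        = jbracket x ^ s / ((2 / Real.sqrt 3) ^ s * jbracket y ^ s) by ring,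
      le_div_iff₀ (mul_pos (Real.rpow_pos_of_pos hc s) (Real.rpow_pos_of_pos (jb_pos y) s))]
    calc jbracket (x + y) ^ s * ((2 / Real.sqrt 3) ^ s * jbracket y ^ s)
        = (2 / Real.sqrt 3) ^ s * jbracket (x + y) ^ s * jbracket y ^ s := by ring
      _ ≤ jbracket x ^ s := h1
end

section
/- Let t, s > 0 and let λ = λ_{t,s} be defined on R^{2d} \ {0} by the equation λ^{-2t}|x|² + λ^{-2s}|ξ|² = 1. Then there exist constants c, C > 0 such that c(|x|^{1/t} + |ξ|^{1/s}) ≤ λ(x,ξ) ≤ C(|x|^{1/t} + |ξ|^{1/s}) for all (x,ξ) ∈ R^{2d} \ {0}. -/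
open Real

private lemma aux_pow_eq (t a : ℝ) (ht : 0 < t) (ha : 0 ≤ a) :
    (a ^ 2 : ℝ) ^ (1 / (2 * t)) = a ^ (1 / t) := by
  rw [← Real.rpow_natCast a 2, ← Real.rpow_mul ha]
  congr 1
  push_cast
  field_simp

private lemma aux_L_eq (t L : ℝ) (ht : 0 < t) (hL : 0 < L) :
    (L ^ (2 * t) : ℝ) ^ (1 / (2 * t)) = L := by
  rw [← Real.rpow_mul hL.le, show (2 * t) * (1 / (2 * t)) = 1 by field_simp,
    Real.rpow_one]

set_option maxHeartbeats 1000000 in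
/-- Let `λ = λ_{t,s}` be the unique positive function on `ℝ^{2d} \ {0}` with
`λ(z)^{-2t}|z₁|² + λ(z)^{-2s}|z₂|² = 1`.  Then there are constants
`c, C > 0` with `c(|x|^{1/t} + |ξ|^{1/s}) ≤ λ(x,ξ) ≤ C(|x|^{1/t} + |ξ|^{1/s})`. -/
theorem stmt_8 {d : ℕ} (t s : ℝ) (ht : 0 < t) (hs : 0 < s)
    (lam : EuclideanSpace ℝ (Fin d) × EuclideanSpace ℝ (Fin d) → ℝ)
    (hlam : ∀ z : EuclideanSpace ℝ (Fin d) × EuclideanSpace ℝ (Fin d), z ≠ 0 →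
      0 < lam z ∧
        lam z ^ (-(2 * t)) * ‖z.1‖ ^ 2 + lam z ^ (-(2 * s)) * ‖z.2‖ ^ 2 = 1) :
    ∃ c C : ℝ, 0 < c ∧ 0 < C ∧
      ∀ z : EuclideanSpace ℝ (Fin d) × EuclideanSpace ℝ (Fin d), z ≠ 0 →
        c * (‖z.1‖ ^ (1 / t) + ‖z.2‖ ^ (1 / s)) ≤ lam z ∧
          lam z ≤ C * (‖z.1‖ ^ (1 / t) + ‖z.2‖ ^ (1 / s)) := by
  refine ⟨1 / 2, (2 : ℝ) ^ (1 / (2 * t)) + (2 : ℝ) ^ (1 / (2 * s)), by norm_num,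
    by positivity, ?_⟩
  intro z hz
  obtain ⟨hL, heq⟩ := hlam z hz
  set L := lam z with hLdef
  set a := ‖z.1‖ with hadef
  set b := ‖z.2‖ with hbdef
  have ha : 0 ≤ a := norm_nonneg _
  have hb : 0 ≤ b := norm_nonneg _
  have hLt : (0 : ℝ) < L ^ (2 * t) := Real.rpow_pos_of_pos hL _
  have hLs : (0 : ℝ) < L ^ (2 * s) := Real.rpow_pos_of_pos hL _
  have hinvt : L ^ (-(2 * t)) = (L ^ (2 * t))⁻¹ := Real.rpow_neg hL.le _
  have hinvs : L ^ (-(2 * s)) = (L ^ (2 * s))⁻¹ := Real.rpow_neg hL.le _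
  rw [hinvt, hinvs] at heq
  have ht2 : (0 : ℝ) ≤ 1 / (2 * t) := by positivity
  have hs2 : (0 : ℝ) ≤ 1 / (2 * s) := by positivity
  -- lower bound pieces
  have h1 : a ^ 2 ≤ L ^ (2 * t) := by
    have h : (L ^ (2 * t))⁻¹ * a ^ 2 ≤ 1 := by
      nlinarith [mul_nonneg (inv_nonneg.mpr hLs.le) (sq_nonneg b)]
    rw [inv_mul_le_iff₀ hLt] at h
    linarith
  have h2 : b ^ 2 ≤ L ^ (2 * s) := by
    have h : (L ^ (2 * s))⁻¹ * b ^ 2 ≤ 1 := by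
      nlinarith [mul_nonneg (inv_nonneg.mpr hLt.le) (sq_nonneg a)]
    rw [inv_mul_le_iff₀ hLs] at h
    linarith
  have ha' : a ^ (1 / t) ≤ L := by
    have := Real.rpow_le_rpow (by positivity) h1 ht2
    rwa [aux_pow_eq t a ht ha, aux_L_eq t L ht hL] at this
  have hb' : b ^ (1 / s) ≤ L := by
    have := Real.rpow_le_rpow (by positivity) h2 hs2
    rwa [aux_pow_eq s b hs hb, aux_L_eq s L hs hL] at this
  refine ⟨by linarith, ?_⟩
  have hant : (0 : ℝ) ≤ a ^ (1 / t) := Real.rpow_nonneg ha _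
  have hbns : (0 : ℝ) ≤ b ^ (1 / s) := Real.rpow_nonneg hb _
  have h2t : (0 : ℝ) < (2 : ℝ) ^ (1 / (2 * t)) := Real.rpow_pos_of_pos two_pos _
  have h2s : (0 : ℝ) < (2 : ℝ) ^ (1 / (2 * s)) := Real.rpow_pos_of_pos two_pos _
  set A := (2 : ℝ) ^ (1 / (2 * t)) with hA
  set B := (2 : ℝ) ^ (1 / (2 * s)) with hB
  set a' := a ^ (1 / t) with ha2
  set b' := b ^ (1 / s) with hb2
  rcases le_or_gt (1 / 2 : ℝ) ((L ^ (2 * t))⁻¹ * a ^ 2) with hc | hc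
  · -- L^{2t} ≤ 2 a^2
    have h3 : L ^ (2 * t) ≤ 2 * a ^ 2 := by
      have h := (le_inv_mul_iff₀ hLt).mp hc
      linarith
    have h4 : L ≤ (2 : ℝ) ^ (1 / (2 * t)) * a ^ (1 / t) := by
      have := Real.rpow_le_rpow hLt.le h3 ht2
      rwa [aux_L_eq t L ht hL,
        Real.mul_rpow (by norm_num) (by positivity), aux_pow_eq t a ht ha] at this
    nlinarith [mul_nonneg h2s.le hant, mul_nonneg h2s.le hbns, mul_nonneg h2t.le hbns]
  · -- then (L^{2s})⁻¹ * b^2 ≥ 1/2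
    have hc' : (1 / 2 : ℝ) ≤ (L ^ (2 * s))⁻¹ * b ^ 2 := by linarith
    have h3 : L ^ (2 * s) ≤ 2 * b ^ 2 := by
      have h := (le_inv_mul_iff₀ hLs).mp hc'
      linarith
    have h4 : L ≤ (2 : ℝ) ^ (1 / (2 * s)) * b ^ (1 / s) := by
      have := Real.rpow_le_rpow hLs.le h3 hs2
      rwa [aux_L_eq s L hs hL,
        Real.mul_rpow (by norm_num) (by positivity), aux_pow_eq s b hs hb] at this
    nlinarith [mul_nonneg h2t.le hant, mul_nonneg h2t.le hbns, mul_nonneg h2s.le hant]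
end

section
/- Let t, s > 0 and let λ = λ_{t,s} be defined on R^{2d} \ {0} by λ^{-2t}|x|² + λ^{-2s}|ξ|² = 1. Then ⟨(x,ξ)⟩^{min(1,1/t)·min(1,1/s)} ≲ 1 + λ(x,ξ) ≲ ⟨(x,ξ)⟩^{max(1,1/t)·max(1,1/s)} for all (x,ξ) ≠ 0, where ⟨z⟩ = (1+|z|²)^{1/2} and ≲ means inequality up to a positive constant independent of (x,ξ). -/
open Real

set_option maxHeartbeats 1000000 in
/-- Let `λ = λ_{t,s}` be the unique positive function on `ℝ^{2d} \ {0}` with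
`λ(z)^{-2t}|z₁|² + λ(z)^{-2s}|z₂|² = 1`.  Then
`⟨(x,ξ)⟩^{min(1,1/t)·min(1,1/s)} ≲ 1 + λ(x,ξ) ≲ ⟨(x,ξ)⟩^{max(1,1/t)·max(1,1/s)}`,
where `⟨(x,ξ)⟩ = (1 + |x|² + |ξ|²)^{1/2}`. -/
theorem stmt_9 {d : ℕ} (t s : ℝ) (ht : 0 < t) (hs : 0 < s)
    (lam : EuclideanSpace ℝ (Fin d) × EuclideanSpace ℝ (Fin d) → ℝ)
    (hlam : ∀ z : EuclideanSpace ℝ (Fin d) × EuclideanSpace ℝ (Fin d), z ≠ 0 →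
      0 < lam z ∧
        lam z ^ (-(2 * t)) * ‖z.1‖ ^ 2 + lam z ^ (-(2 * s)) * ‖z.2‖ ^ 2 = 1) :
    ∃ c C : ℝ, 0 < c ∧ 0 < C ∧
      ∀ z : EuclideanSpace ℝ (Fin d) × EuclideanSpace ℝ (Fin d), z ≠ 0 →
        c * (1 + ‖z.1‖ ^ 2 + ‖z.2‖ ^ 2) ^ ((min 1 (1 / t) * min 1 (1 / s)) / 2) ≤
            1 + lam z ∧
          1 + lam z ≤
            C * (1 + ‖z.1‖ ^ 2 + ‖z.2‖ ^ 2) ^ ((max 1 (1 / t) * max 1 (1 / s)) / 2) := by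
  have ht' : (0:ℝ) < 1 / t := by positivity
  have hs' : (0:ℝ) < 1 / s := by positivity
  set α : ℝ := min 1 (1/t) * min 1 (1/s) with hαdef
  set β : ℝ := max 1 (1/t) * max 1 (1/s) with hβdef
  have hα0 : 0 < α := mul_pos (lt_min one_pos ht') (lt_min one_pos hs')
  have hα1 : α ≤ 1 := by
    have h1 : min 1 (1/t) ≤ 1 := min_le_left _ _
    have h2 : min 1 (1/s) ≤ 1 := min_le_left _ _
    have h3 : 0 ≤ min 1 (1/t) := le_min zero_le_one ht'.le
    have h4 : 0 ≤ min 1 (1/s) := le_min zero_le_one hs'.le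
    nlinarith
  have hαt : α ≤ 1 / t := by
    have h1 : min 1 (1/t) ≤ 1/t := min_le_right _ _
    have h2 : min 1 (1/s) ≤ 1 := min_le_left _ _
    have h4 : 0 ≤ min 1 (1/s) := le_min zero_le_one hs'.le
    nlinarith
  have hαs : α ≤ 1 / s := by
    have h1 : min 1 (1/s) ≤ 1/s := min_le_right _ _
    have h2 : min 1 (1/t) ≤ 1 := min_le_left _ _
    have h4 : 0 ≤ min 1 (1/t) := le_min zero_le_one ht'.le
    nlinarith
  have hβ1 : (1:ℝ) ≤ β := one_le_mul_of_one_le_of_one_le (le_max_left _ _) (le_max_left _ _)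
  have hβt : 1 / t ≤ β := by
    have h1 : 1/t ≤ max 1 (1/t) := le_max_right _ _
    have h2 : (1:ℝ) ≤ max 1 (1/s) := le_max_left _ _
    nlinarith
  have hβs : 1 / s ≤ β := by
    have h1 : 1/s ≤ max 1 (1/s) := le_max_right _ _
    have h2 : (1:ℝ) ≤ max 1 (1/t) := le_max_left _ _
    nlinarith
  refine ⟨1/4, 1 + 2 ^ (1/(2*t)) + 2 ^ (1/(2*s)) , by norm_num, by positivity, ?_⟩
  intro z hz
  obtain ⟨hL, hE⟩ := hlam z hz
  set L := lam z with hLdef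
  set a := ‖z.1‖ with ha
  set b := ‖z.2‖ with hb
  have ha0 : 0 ≤ a := norm_nonneg _
  have hb0 : 0 ≤ b := norm_nonneg _
  set Q : ℝ := 1 + a ^ 2 + b ^ 2 with hQdef
  have hQ1 : (1:ℝ) ≤ Q := by nlinarith [sq_nonneg a, sq_nonneg b]
  have hQ0 : (0:ℝ) < Q := by linarith
  -- basic rpow facts
  have hLt : (0:ℝ) < L ^ t := rpow_pos_of_pos hL t
  have hLs : (0:ℝ) < L ^ s := rpow_pos_of_pos hL s
  have hL2t : L ^ (2*t) = (L ^ t) ^ 2 := by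
    rw [← Real.rpow_natCast (L ^ t) 2, ← Real.rpow_mul hL.le]
    norm_num [mul_comm]
  have hL2s : L ^ (2*s) = (L ^ s) ^ 2 := by
    rw [← Real.rpow_natCast (L ^ s) 2, ← Real.rpow_mul hL.le]
    norm_num [mul_comm]
  have hneg2t : L ^ (-(2*t)) = (L ^ (2*t))⁻¹ := Real.rpow_neg hL.le _
  have hneg2s : L ^ (-(2*s)) = (L ^ (2*s))⁻¹ := Real.rpow_neg hL.le _
  have hL2t0 : (0:ℝ) < L ^ (2*t) := rpow_pos_of_pos hL _
  have hL2s0 : (0:ℝ) < L ^ (2*s) := rpow_pos_of_pos hL _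
  -- a² ≤ L^{2t}, b² ≤ L^{2s}
  have hE' : (L ^ (2*t))⁻¹ * a ^ 2 + (L ^ (2*s))⁻¹ * b ^ 2 = 1 := by
    rw [← hneg2t, ← hneg2s]; exact hE
  have haL : a ^ 2 ≤ L ^ (2*t) := by
    have h1 : (L ^ (2*t))⁻¹ * a ^ 2 ≤ 1 := by
      linarith [mul_nonneg (inv_nonneg.mpr hL2s0.le) (sq_nonneg b)]
    calc a ^ 2 = L ^ (2*t) * ((L ^ (2*t))⁻¹ * a ^ 2) := by
          rw [← mul_assoc, mul_inv_cancel₀ hL2t0.ne', one_mul]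
      _ ≤ L ^ (2*t) * 1 := by
          exact mul_le_mul_of_nonneg_left h1 hL2t0.le
      _ = L ^ (2*t) := mul_one _
  have hbL : b ^ 2 ≤ L ^ (2*s) := by
    have h1 : (L ^ (2*s))⁻¹ * b ^ 2 ≤ 1 := by
      linarith [mul_nonneg (inv_nonneg.mpr hL2t0.le) (sq_nonneg a)]
    calc b ^ 2 = L ^ (2*s) * ((L ^ (2*s))⁻¹ * b ^ 2) := by
          rw [← mul_assoc, mul_inv_cancel₀ hL2s0.ne', one_mul]
      _ ≤ L ^ (2*s) * 1 := mul_le_mul_of_nonneg_left h1 hL2s0.le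
      _ = L ^ (2*s) := mul_one _
  have haLt : a ≤ L ^ t := by
    have h : a ^ 2 ≤ (L ^ t) ^ 2 := by rw [← hL2t]; exact haL
    exact (pow_le_pow_iff_left₀ ha0 hLt.le two_ne_zero).mp h
  have hbLs : b ≤ L ^ s := by
    have h : b ^ 2 ≤ (L ^ s) ^ 2 := by rw [← hL2s]; exact hbL
    exact (pow_le_pow_iff_left₀ hb0 hLs.le two_ne_zero).mp h
  constructor
  · -- lower bound
    have key : Q ^ (α/2) ≤ 4 * (1 + L) := by
      rcases le_total (max a b) 1 with hm | hm
      · have h1 : a ≤ 1 := le_trans (le_max_left a b) hm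
        have h2 : b ≤ 1 := le_trans (le_max_right a b) hm
        have e1 : a^2 ≤ 1 := pow_le_one₀ ha0 h1
        have e2 : b^2 ≤ 1 := pow_le_one₀ hb0 h2
        have hQ3 : Q ≤ 3 := by rw [hQdef]; linarith
        calc Q ^ (α/2) ≤ (3:ℝ) ^ (α/2) := rpow_le_rpow hQ0.le hQ3 (by positivity)
          _ ≤ (3:ℝ) ^ (1:ℝ) := rpow_le_rpow_of_exponent_le (by norm_num) (by linarith)
          _ = 3 := rpow_one 3
          _ ≤ 4 * (1 + L) := by linarith
      · have hm0 : (0:ℝ) ≤ max a b := le_trans zero_le_one hm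
        have hmL : (max a b) ^ α ≤ L := by
          rcases le_total a b with hab | hab
          · rw [max_eq_right hab]
            have hb1 : (1:ℝ) ≤ b := by rwa [max_eq_right hab] at hm
            calc b ^ α ≤ b ^ (1/s) := rpow_le_rpow_of_exponent_le hb1 hαs
              _ ≤ (L ^ s) ^ (1/s) := rpow_le_rpow hb0 hbLs (by positivity)
              _ = L := by
                  rw [← Real.rpow_mul hL.le, mul_one_div, div_self hs.ne', rpow_one]
          · rw [max_eq_left hab]
            have ha1 : (1:ℝ) ≤ a := by rwa [max_eq_left hab] at hm
            calc a ^ α ≤ a ^ (1/t) := rpow_le_rpow_of_exponent_le ha1 hαt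
              _ ≤ (L ^ t) ^ (1/t) := rpow_le_rpow ha0 haLt (by positivity)
              _ = L := by
                  rw [← Real.rpow_mul hL.le, mul_one_div, div_self ht.ne', rpow_one]
        have hQ3m : Q ≤ 3 * (max a b) ^ 2 := by
          have e1 : a^2 ≤ (max a b)^2 := pow_le_pow_left₀ ha0 (le_max_left a b) 2
          have e2 : b^2 ≤ (max a b)^2 := pow_le_pow_left₀ hb0 (le_max_right a b) 2
          have e3 : (1:ℝ) ≤ (max a b)^2 := by
            calc (1:ℝ) = 1^2 := by norm_num
              _ ≤ (max a b)^2 := pow_le_pow_left₀ zero_le_one hm 2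
          rw [hQdef]; linarith
        calc Q ^ (α/2) ≤ (3 * (max a b)^2) ^ (α/2) :=
              rpow_le_rpow hQ0.le hQ3m (by positivity)
          _ = 3 ^ (α/2) * ((max a b)^2) ^ (α/2) := mul_rpow (by norm_num) (by positivity)
          _ = 3 ^ (α/2) * (max a b) ^ α := by
              rw [← Real.rpow_natCast (max a b) 2, ← Real.rpow_mul hm0]
              norm_num
              left
              rw [show (2:ℝ) * (α/2) = α by ring]
          _ ≤ 3 ^ (1:ℝ) * (max a b) ^ α := by
              apply mul_le_mul_of_nonneg_right _ (rpow_nonneg hm0 α)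
              exact rpow_le_rpow_of_exponent_le (by norm_num) (by linarith)
          _ = 3 * (max a b) ^ α := by rw [rpow_one]
          _ ≤ 3 * L := mul_le_mul_of_nonneg_left hmL (by norm_num)
          _ ≤ 4 * (1 + L) := by linarith
    linarith
  · -- upper bound
    have hC2t : (0:ℝ) < 2 ^ (1/(2*t)) := by positivity
    have hC2s : (0:ℝ) < 2 ^ (1/(2*s)) := by positivity
    have hQβ : (1:ℝ) ≤ Q ^ (β/2) := by
      calc (1:ℝ) = Q ^ (0:ℝ) := (rpow_zero Q).symm
        _ ≤ Q ^ (β/2) := rpow_le_rpow_of_exponent_le hQ1 (by positivity)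
    have hhalf : 1/2 ≤ (L ^ (2*t))⁻¹ * a^2 ∨ 1/2 ≤ (L ^ (2*s))⁻¹ * b^2 := by
      by_contra h
      push_neg at h
      linarith [h.1, h.2]
    have key : ∀ r : ℝ, 0 < r → 1/r ≤ β → L ^ (2*r) ≤ 2 * Q →
        L ≤ 2 ^ (1/(2*r)) * Q ^ (β/2) := by
      intro r hr hrβ hLe
      have h2r : (0:ℝ) < 2*r := by linarith
      calc L = (L ^ (2*r)) ^ (1/(2*r)) := by
            rw [← Real.rpow_mul hL.le, mul_one_div, div_self h2r.ne', rpow_one]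
        _ ≤ (2*Q) ^ (1/(2*r)) :=
            rpow_le_rpow (rpow_pos_of_pos hL _).le hLe (by positivity)
        _ = 2 ^ (1/(2*r)) * Q ^ (1/(2*r)) := mul_rpow (by norm_num) hQ0.le
        _ ≤ 2 ^ (1/(2*r)) * Q ^ (β/2) := by
            apply mul_le_mul_of_nonneg_left _ (by positivity)
            apply rpow_le_rpow_of_exponent_le hQ1
            rw [show (1:ℝ)/(2*r) = (1/r)/2 by ring]
            linarith
    rcases hhalf with hc | hc
    · have hLQ : L ^ (2*t) ≤ 2 * Q := by
        have h2 := mul_le_mul_of_nonneg_left hc hL2t0.le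
        rw [← mul_assoc, mul_inv_cancel₀ hL2t0.ne', one_mul] at h2
        have e : a^2 ≤ Q := by rw [hQdef]; nlinarith [sq_nonneg b]
        linarith
      have h3 := key t ht hβt hLQ
      have h4 : 0 ≤ 2 ^ (1/(2*s)) * Q ^ (β/2) := by positivity
      nlinarith [h3, h4, hQβ]
    · have hLQ : L ^ (2*s) ≤ 2 * Q := by
        have h2 := mul_le_mul_of_nonneg_left hc hL2s0.le
        rw [← mul_assoc, mul_inv_cancel₀ hL2s0.ne', one_mul] at h2
        have e : b^2 ≤ Q := by rw [hQdef]; nlinarith [sq_nonneg a]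
        linarith
      have h3 := key s hs hβs hLQ
      have h4 : 0 ≤ 2 ^ (1/(2*t)) * Q ^ (β/2) := by positivity
      nlinarith [h3, h4, hQβ]
end

section
/- Let s, t > 0 and suppose W ⊆ R^{4d} \ {0} is closed (in R^{4d} \ {0}), invariant under (x,y,ξ,η) ↦ (μ^t x, μ^t y, μ^s ξ, μ^s η) for all μ > 0, and contains no point of the form (0,y,0,η) with (y,η) ≠ 0. Then there exists c > 0 such that for all (x,y,ξ,η) ∈ W, |y|^{1/t} + |η|^{1/s} < c(|x|^{1/t} + |ξ|^{1/s}). -/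
open Real

private lemma aux_scale {E : Type*} [NormedAddCommGroup E] [NormedSpace ℝ E]
    {μ t : ℝ} (hμ : 0 < μ) (ht : 0 < t) (x : E) :
    ‖(μ ^ t) • x‖ ^ (1 / t) = μ * ‖x‖ ^ (1 / t) := by
  have hpos : (0:ℝ) < μ ^ t := Real.rpow_pos_of_pos hμ t
  rw [norm_smul, Real.norm_eq_abs, abs_of_pos hpos,
    Real.mul_rpow hpos.le (norm_nonneg x), ← Real.rpow_mul hμ.le,
    mul_one_div, div_self ht.ne', Real.rpow_one]

private lemma aux_le_one {a t : ℝ} (ha : 0 ≤ a) (ht : 0 < t) (h : a ^ (1 / t) ≤ 1) :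
    a ≤ 1 := by
  have h2 := Real.rpow_le_rpow (Real.rpow_nonneg ha _) h ht.le
  rwa [Real.one_rpow, ← Real.rpow_mul ha, one_div, inv_mul_cancel₀ ht.ne',
    Real.rpow_one] at h2

/-- Let `W ⊆ ℝ^{4d} \ {0}` be closed in `ℝ^{4d} \ {0}`, invariant under
`(x,y,ξ,η) ↦ (μ^t x, μ^t y, μ^s ξ, μ^s η)` for `μ > 0`, and containing no point
`(0,y,0,η)` with `(y,η) ≠ 0`.  Then there exists `c > 0` such that
`|y|^{1/t} + |η|^{1/s} < c(|x|^{1/t} + |ξ|^{1/s})` for all `(x,y,ξ,η) ∈ W`. -/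
theorem stmt_11 {d : ℕ} (t s : ℝ) (ht : 0 < t) (hs : 0 < s)
    (W : Set (EuclideanSpace ℝ (Fin d) × EuclideanSpace ℝ (Fin d) ×
      EuclideanSpace ℝ (Fin d) × EuclideanSpace ℝ (Fin d)))
    (hW0 : ∀ z ∈ W, z ≠ 0)
    (hWclosed : closure W ⊆ W ∪ {0})
    (hWconic : ∀ μ : ℝ, 0 < μ → ∀ x y ξ η : EuclideanSpace ℝ (Fin d),
      (x, y, ξ, η) ∈ W → (μ ^ t • x, μ ^ t • y, μ ^ s • ξ, μ ^ s • η) ∈ W)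
    (hex : ∀ y η : EuclideanSpace ℝ (Fin d), (y, η) ≠ 0 → (0, y, 0, η) ∉ W) :
    ∃ c : ℝ, 0 < c ∧ ∀ x y ξ η : EuclideanSpace ℝ (Fin d), (x, y, ξ, η) ∈ W →
      ‖y‖ ^ (1 / t) + ‖η‖ ^ (1 / s) < c * (‖x‖ ^ (1 / t) + ‖ξ‖ ^ (1 / s)) := by
  have ht' : 0 < 1 / t := by positivity
  have hs' : 0 < 1 / s := by positivity
  set N : (EuclideanSpace ℝ (Fin d) × EuclideanSpace ℝ (Fin d) × EuclideanSpace ℝ (Fin d) × EuclideanSpace ℝ (Fin d)) → ℝ := fun z =>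
    ‖z.1‖ ^ (1 / t) + ‖z.2.1‖ ^ (1 / t) + ‖z.2.2.1‖ ^ (1 / s) + ‖z.2.2.2‖ ^ (1 / s)
    with hN
  have hNcont : Continuous N := by
    apply Continuous.add
    apply Continuous.add
    apply Continuous.add
    · exact (continuous_fst.norm).rpow_const (fun _ => Or.inr ht'.le)
    · exact ((continuous_fst.comp continuous_snd).norm).rpow_const (fun _ => Or.inr ht'.le)
    · exact ((continuous_fst.comp (continuous_snd.comp continuous_snd)).norm).rpow_const
        (fun _ => Or.inr hs'.le)
    · exact ((continuous_snd.comp (continuous_snd.comp continuous_snd)).norm).rpow_const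
        (fun _ => Or.inr hs'.le)
  have hN0 : N 0 = 0 := by
    simp only [hN, Prod.fst_zero, Prod.snd_zero, norm_zero,
      Real.zero_rpow ht'.ne', Real.zero_rpow hs'.ne']
    ring
  have hNpos : ∀ z ∈ W, 0 < N z := by
    intro z hz
    rcases lt_or_ge 0 (N z) with h | h
    · exact h
    · exfalso
      apply hW0 z hz
      have h1 : ‖z.1‖ ^ (1 / t) = 0 ∧ ‖z.2.1‖ ^ (1 / t) = 0 ∧
          ‖z.2.2.1‖ ^ (1 / s) = 0 ∧ ‖z.2.2.2‖ ^ (1 / s) = 0 := by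
        have a1 := Real.rpow_nonneg (norm_nonneg z.1) (1 / t)
        have a2 := Real.rpow_nonneg (norm_nonneg z.2.1) (1 / t)
        have a3 := Real.rpow_nonneg (norm_nonneg z.2.2.1) (1 / s)
        have a4 := Real.rpow_nonneg (norm_nonneg z.2.2.2) (1 / s)
        simp only [hN] at h
        refine ⟨?_, ?_, ?_, ?_⟩ <;> linarith
      obtain ⟨e1, e2, e3, e4⟩ := h1
      rw [Real.rpow_eq_zero (norm_nonneg _) ht'.ne', norm_eq_zero] at e1 e2
      rw [Real.rpow_eq_zero (norm_nonneg _) hs'.ne', norm_eq_zero] at e3 e4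
      ext1
      · exact e1
      · ext1
        · exact e2
        · exact Prod.ext e3 e4
  -- scaling
  have hscaleN : ∀ μ : ℝ, 0 < μ → ∀ x y ξ η : EuclideanSpace ℝ (Fin d),
      N (μ ^ t • x, μ ^ t • y, μ ^ s • ξ, μ ^ s • η) = μ * N (x, y, ξ, η) := by
    intro μ hμ x y ξ η
    simp only [hN]
    rw [aux_scale hμ ht, aux_scale hμ ht, aux_scale hμ hs, aux_scale hμ hs]
    ring
  set K : Set (EuclideanSpace ℝ (Fin d) × EuclideanSpace ℝ (Fin d) × EuclideanSpace ℝ (Fin d) × EuclideanSpace ℝ (Fin d)) := W ∩ N ⁻¹' {1} with hK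
  have hKclosed : IsClosed K := by
    have h01 : (0 : EuclideanSpace ℝ (Fin d) × EuclideanSpace ℝ (Fin d) × EuclideanSpace ℝ (Fin d) × EuclideanSpace ℝ (Fin d)) ∉ N ⁻¹' {1} := by
      simp [Set.mem_preimage, hN0]
    have hKeq : K = (W ∪ {0}) ∩ N ⁻¹' {1} := by
      ext z
      simp only [hK, Set.mem_inter_iff, Set.mem_union, Set.mem_singleton_iff]
      constructor
      · rintro ⟨h1, h2⟩; exact ⟨Or.inl h1, h2⟩
      · rintro ⟨h1 | h1, h2⟩
        · exact ⟨h1, h2⟩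
        · exact absurd (h1 ▸ h2) h01
    rw [hKeq]
    apply IsClosed.inter
    · apply isClosed_of_closure_subset
      calc closure (W ∪ {0}) = closure W ∪ closure {0} := closure_union
        _ ⊆ (W ∪ {0}) ∪ {0} := by
            rw [closure_singleton]
            exact Set.union_subset_union_left _ hWclosed
        _ = W ∪ {0} := Set.union_assoc _ _ _ ▸ by rw [Set.union_self]
    · exact isClosed_singleton.preimage hNcont
  have hKsub : K ⊆ Metric.closedBall 0 1 := by
    intro z hz
    obtain ⟨-, hz2⟩ := hz
    simp only [Set.mem_preimage, Set.mem_singleton_iff] at hz2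
    have a1 := Real.rpow_nonneg (norm_nonneg z.1) (1 / t)
    have a2 := Real.rpow_nonneg (norm_nonneg z.2.1) (1 / t)
    have a3 := Real.rpow_nonneg (norm_nonneg z.2.2.1) (1 / s)
    have a4 := Real.rpow_nonneg (norm_nonneg z.2.2.2) (1 / s)
    simp only [hN] at hz2
    have b1 : ‖z.1‖ ≤ 1 := aux_le_one (norm_nonneg _) ht (by linarith)
    have b2 : ‖z.2.1‖ ≤ 1 := aux_le_one (norm_nonneg _) ht (by linarith)
    have b3 : ‖z.2.2.1‖ ≤ 1 := aux_le_one (norm_nonneg _) hs (by linarith)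
    have b4 : ‖z.2.2.2‖ ≤ 1 := aux_le_one (norm_nonneg _) hs (by linarith)
    rw [Metric.mem_closedBall, dist_zero_right]
    rw [Prod.norm_def, Prod.norm_def, Prod.norm_def]
    simp only [max_le_iff]
    exact ⟨b1, b2, b3, b4⟩
  have hKcompact : IsCompact K :=
    Metric.isCompact_of_isClosed_isBounded hKclosed
      (Metric.isBounded_closedBall.subset hKsub)
  -- the target function
  set f : (EuclideanSpace ℝ (Fin d) × EuclideanSpace ℝ (Fin d) × EuclideanSpace ℝ (Fin d) × EuclideanSpace ℝ (Fin d)) → ℝ := fun z => ‖z.1‖ ^ (1 / t) + ‖z.2.2.1‖ ^ (1 / s) with hf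
  have hfcont : Continuous f := by
    apply Continuous.add
    · exact (continuous_fst.norm).rpow_const (fun _ => Or.inr ht'.le)
    · exact ((continuous_fst.comp (continuous_snd.comp continuous_snd)).norm).rpow_const
        (fun _ => Or.inr hs'.le)
  -- scaled points of W land in K
  have hWK : ∀ x y ξ η : EuclideanSpace ℝ (Fin d), (x, y, ξ, η) ∈ W →
      ∃ μ : ℝ, 0 < μ ∧ (μ ^ t • x, μ ^ t • y, μ ^ s • ξ, μ ^ s • η) ∈ K := by
    intro x y ξ η hz
    have hpos := hNpos _ hz
    refine ⟨(N (x, y, ξ, η))⁻¹, inv_pos.mpr hpos, hWconic _ (inv_pos.mpr hpos) _ _ _ _ hz, ?_⟩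
    simp only [Set.mem_preimage, Set.mem_singleton_iff]
    rw [hscaleN _ (inv_pos.mpr hpos)]
    exact inv_mul_cancel₀ hpos.ne'
  rcases Set.eq_empty_or_nonempty K with hKe | hKne
  · -- then W is empty
    refine ⟨1, one_pos, fun x y ξ η hz => ?_⟩
    exfalso
    obtain ⟨μ, hμ, hzK⟩ := hWK x y ξ η hz
    exact Set.eq_empty_iff_forall_notMem.mp hKe _ hzK
  · obtain ⟨z₀, hz₀K, hmin⟩ := hKcompact.exists_isMinOn hKne hfcont.continuousOn
    set m := f z₀ with hm
    have hmpos : 0 < m := by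
      rcases lt_or_ge 0 m with h | h
      · exact h
      · exfalso
        have a1 := Real.rpow_nonneg (norm_nonneg z₀.1) (1 / t)
        have a3 := Real.rpow_nonneg (norm_nonneg z₀.2.2.1) (1 / s)
        have e1 : ‖z₀.1‖ ^ (1 / t) = 0 := by simp only [hm, hf] at h; linarith
        have e3 : ‖z₀.2.2.1‖ ^ (1 / s) = 0 := by simp only [hm, hf] at h; linarith
        rw [Real.rpow_eq_zero (norm_nonneg _) ht'.ne', norm_eq_zero] at e1
        rw [Real.rpow_eq_zero (norm_nonneg _) hs'.ne', norm_eq_zero] at e3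
        obtain ⟨hz₀W, hz₀N⟩ := hz₀K
        simp only [Set.mem_preimage, Set.mem_singleton_iff] at hz₀N
        have hyη : (z₀.2.1, z₀.2.2.2) ≠ 0 := by
          intro hc
          have hy : z₀.2.1 = 0 := congrArg Prod.fst hc
          have hη : z₀.2.2.2 = 0 := congrArg Prod.snd hc
          simp only [hN, e1, e3, hy, hη, norm_zero,
            Real.zero_rpow ht'.ne', Real.zero_rpow hs'.ne'] at hz₀N
          norm_num at hz₀N
        apply hex _ _ hyη
        have : z₀ = (0, z₀.2.1, 0, z₀.2.2.2) := by
          ext1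
          · exact e1
          · ext1
            · rfl
            · exact Prod.ext e3 rfl
        rw [← this]
        exact hz₀W
    refine ⟨2 / m, by positivity, fun x y ξ η hz => ?_⟩
    have hpos := hNpos _ hz
    set μ := (N (x, y, ξ, η))⁻¹ with hμdef
    have hμ : 0 < μ := inv_pos.mpr hpos
    set z' := (μ ^ t • x, μ ^ t • y, μ ^ s • ξ, μ ^ s • η) with hz'
    have hz'W : z' ∈ W := hWconic _ hμ _ _ _ _ hz
    have hz'N : N z' = 1 := by
      rw [hz', hscaleN _ hμ]
      exact inv_mul_cancel₀ hpos.ne'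
    have hz'K : z' ∈ K := ⟨hz'W, by simpa using hz'N⟩
    -- g z' ≤ 1
    have a1 := Real.rpow_nonneg (norm_nonneg (μ ^ t • x)) (1 / t)
    have a3 := Real.rpow_nonneg (norm_nonneg (μ ^ s • ξ)) (1 / s)
    have hg : ‖μ ^ t • y‖ ^ (1 / t) + ‖μ ^ s • η‖ ^ (1 / s) ≤ 1 := by
      simp only [hN, hz'] at hz'N
      linarith
    have hfge : m ≤ f z' := hmin hz'K
    have hfz' : f z' = μ * (‖x‖ ^ (1 / t) + ‖ξ‖ ^ (1 / s)) := by
      simp only [hf, hz', aux_scale hμ ht, aux_scale hμ hs]; ring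
    have hgz' : ‖μ ^ t • y‖ ^ (1 / t) + ‖μ ^ s • η‖ ^ (1 / s)
        = μ * (‖y‖ ^ (1 / t) + ‖η‖ ^ (1 / s)) := by
      rw [aux_scale hμ ht, aux_scale hμ hs]; ring
    rw [hgz'] at hg
    rw [hfz'] at hfge
    -- from μ*g ≤ 1 and m ≤ μ*f, derive g < (2/m) f
    have key : μ * (‖y‖ ^ (1 / t) + ‖η‖ ^ (1 / s)) <
        μ * ((2 / m) * (‖x‖ ^ (1 / t) + ‖ξ‖ ^ (1 / s))) := by
      have h2 : (2 / m) * m ≤ (2 / m) * (μ * (‖x‖ ^ (1 / t) + ‖ξ‖ ^ (1 / s))) :=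
        mul_le_mul_of_nonneg_left hfge (by positivity)
      have h3 : (2 / m) * m = 2 := by field_simp
      nlinarith [h2, h3, hg]
    exact lt_of_mul_lt_mul_left (by linarith [key]) hμ.le
end

section
/- Let t, s > 0 with t + s > 1, let W_K ⊆ R^{4d} \ {0} and W_u ⊆ R^{2d} \ {0} be closed sets invariant under the anisotropic scalings (x,y,ξ,η) ↦ (μ^t x, μ^t y, μ^s ξ, μ^s η) and (y,η) ↦ (μ^t y, μ^s η) respectively. Assume W_K contains no point (x,0,ξ,0) ≠ 0 and no point (0,y,0,η) ≠ 0. Then the set W_K' ∘ W_u = {(x,ξ) : ∃(y,η) ∈ W_u, (x,y,ξ,−η) ∈ W_K} is invariant under (x,ξ) ↦ (μ^t x, μ^s ξ) and is closed in R^{2d} \ {0}. -/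
open Real

section Aux

variable {E F : Type*} [NormedAddCommGroup E] [NormedAddCommGroup F]

/-- Anisotropic gauge `‖x‖^(1/t) + ‖ξ‖^(1/s)`. -/
noncomputable def aN (t s : ℝ) (p : E × F) : ℝ :=
  ‖p.1‖ ^ (1/t) + ‖p.2‖ ^ (1/s)

lemma aN_nonneg (t s : ℝ) (p : E × F) : 0 ≤ aN t s p :=
  add_nonneg (Real.rpow_nonneg (norm_nonneg _) _) (Real.rpow_nonneg (norm_nonneg _) _)

lemma aN_continuous (t s : ℝ) (ht : 0 < t) (hs : 0 < s) :
    Continuous (aN t s : E × F → ℝ) := by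
  apply Continuous.add
  · exact (Real.continuous_rpow_const (by positivity)).comp (continuous_norm.comp continuous_fst)
  · exact (Real.continuous_rpow_const (by positivity)).comp (continuous_norm.comp continuous_snd)

lemma aN_eq_zero {t s : ℝ} (ht : 0 < t) (hs : 0 < s) {p : E × F}
    (h : aN t s p = 0) : p = 0 := by
  unfold aN at h
  have h0a := Real.rpow_nonneg (norm_nonneg p.1) (1/t)
  have h0b := Real.rpow_nonneg (norm_nonneg p.2) (1/s)
  have h1 : ‖p.1‖ ^ (1/t) = 0 := by linarith
  have h2 : ‖p.2‖ ^ (1/s) = 0 := by linarith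
  rw [Real.rpow_eq_zero (norm_nonneg _) (by positivity)] at h1
  rw [Real.rpow_eq_zero (norm_nonneg _) (by positivity)] at h2
  exact Prod.ext (norm_eq_zero.mp h1) (norm_eq_zero.mp h2)

lemma aN_pos {t s : ℝ} (ht : 0 < t) (hs : 0 < s) {p : E × F} (hp : p ≠ 0) :
    0 < aN t s p := by
  rcases lt_or_eq_of_le (aN_nonneg t s p) with h | h
  · exact h
  · exact absurd (aN_eq_zero ht hs h.symm) hp

lemma norm_rpow_smul {t : ℝ} {μ : ℝ} (hμ : 0 < μ) {E : Type*}
    [NormedAddCommGroup E] [NormedSpace ℝ E] (x : E) :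
    ‖(μ ^ t : ℝ) • x‖ = μ ^ t * ‖x‖ := by
  rw [norm_smul, Real.norm_eq_abs, abs_of_pos (Real.rpow_pos_of_pos hμ t)]

lemma rpow_inv_rpow' {a t : ℝ} (ha : 0 ≤ a) (ht : t ≠ 0) : (a ^ t) ^ (1/t) = a := by
  rw [← Real.rpow_mul ha, mul_one_div, div_self ht, Real.rpow_one]

omit [NormedAddCommGroup E] [NormedAddCommGroup F] in
lemma dummy : True := trivial

lemma norm_fst_le_of_aN_le {t s : ℝ} (ht : 0 < t) {p : E × F} {R : ℝ}
    (h : aN t s p ≤ R) : ‖p.1‖ ≤ R ^ t := by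
  have h1 : ‖p.1‖ ^ (1/t) ≤ R :=
    le_trans (le_add_of_nonneg_right (Real.rpow_nonneg (norm_nonneg _) _)) h
  have h0 : (0:ℝ) ≤ ‖p.1‖ ^ (1/t) := Real.rpow_nonneg (norm_nonneg _) _
  calc ‖p.1‖ = (‖p.1‖ ^ (1/t)) ^ t := by
        rw [← Real.rpow_mul (norm_nonneg _), one_div_mul_cancel ht.ne', Real.rpow_one]
    _ ≤ R ^ t := Real.rpow_le_rpow h0 h1 ht.le

lemma norm_snd_le_of_aN_le {t s : ℝ} (hs : 0 < s) {p : E × F} {R : ℝ}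
    (h : aN t s p ≤ R) : ‖p.2‖ ≤ R ^ s := by
  have h1 : ‖p.2‖ ^ (1/s) ≤ R :=
    le_trans (le_add_of_nonneg_left (Real.rpow_nonneg (norm_nonneg _) _)) h
  have h0 : (0:ℝ) ≤ ‖p.2‖ ^ (1/s) := Real.rpow_nonneg (norm_nonneg _) _
  calc ‖p.2‖ = (‖p.2‖ ^ (1/s)) ^ s := by
        rw [← Real.rpow_mul (norm_nonneg _), one_div_mul_cancel hs.ne', Real.rpow_one]
    _ ≤ R ^ s := Real.rpow_le_rpow h0 h1 hs.le

variable [NormedSpace ℝ E] [NormedSpace ℝ F]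

lemma aN_smul (t s : ℝ) (ht : 0 < t) (hs : 0 < s) {μ : ℝ} (hμ : 0 < μ) (x : E) (ξ : F) :
    aN t s ((μ ^ t • x, μ ^ s • ξ) : E × F) = μ * aN t s (x, ξ) := by
  unfold aN
  simp only [norm_rpow_smul hμ]
  rw [Real.mul_rpow (Real.rpow_nonneg hμ.le _) (norm_nonneg _),
      Real.mul_rpow (Real.rpow_nonneg hμ.le _) (norm_nonneg _),
      rpow_inv_rpow' hμ.le ht.ne', rpow_inv_rpow' hμ.le hs.ne', mul_add]

end Aux

/-- The key bound: points of `WK` satisfy `aN (y,η) ≤ c · aN (x,ξ)`. -/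
lemma key_bound {d : ℕ} (t s : ℝ) (ht : 0 < t) (hs : 0 < s)
    (WK : Set (EuclideanSpace ℝ (Fin d) × EuclideanSpace ℝ (Fin d) ×
      EuclideanSpace ℝ (Fin d) × EuclideanSpace ℝ (Fin d)))
    (hWKclosed : closure WK ⊆ WK ∪ {0})
    (hWKconic : ∀ μ : ℝ, 0 < μ → ∀ x y ξ η : EuclideanSpace ℝ (Fin d),
      (x, y, ξ, η) ∈ WK → (μ ^ t • x, μ ^ t • y, μ ^ s • ξ, μ ^ s • η) ∈ WK)
    (hWF2 : ∀ y η : EuclideanSpace ℝ (Fin d), (y, η) ≠ 0 → (0, y, 0, η) ∉ WK) :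
    ∃ c : ℝ, 0 < c ∧ ∀ x y ξ η : EuclideanSpace ℝ (Fin d),
      (x, y, ξ, η) ∈ WK → aN t s (y, η) ≤ c * aN t s (x, ξ) := by
  by_contra hcon
  push_neg at hcon
  have hseq : ∀ n : ℕ, ∃ x y ξ η : EuclideanSpace ℝ (Fin d),
      (x, y, ξ, η) ∈ WK ∧ ((n:ℝ)+1) * aN t s (x, ξ) < aN t s (y, η) :=
    fun n => hcon ((n:ℝ)+1) (by positivity)
  choose X Y Ξ H hmem hlt using hseq
  have hYpos : ∀ n, 0 < aN t s (Y n, H n) := fun n =>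
    lt_of_le_of_lt (mul_nonneg (by positivity) (aN_nonneg _ _ _)) (hlt n)
  have hμpos : ∀ n, 0 < (aN t s (Y n, H n))⁻¹ := fun n => inv_pos.mpr (hYpos n)
  set q : ℕ → (EuclideanSpace ℝ (Fin d) × EuclideanSpace ℝ (Fin d) ×
      EuclideanSpace ℝ (Fin d) × EuclideanSpace ℝ (Fin d)) :=
    fun n => ((aN t s (Y n, H n))⁻¹ ^ t • X n, (aN t s (Y n, H n))⁻¹ ^ t • Y n,
      (aN t s (Y n, H n))⁻¹ ^ s • Ξ n, (aN t s (Y n, H n))⁻¹ ^ s • H n) with hqdef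
  have hqmem : ∀ n, q n ∈ WK := fun n =>
    hWKconic _ (hμpos n) (X n) (Y n) (Ξ n) (H n) (hmem n)
  have haNy : ∀ n, aN t s ((q n).2.1, (q n).2.2.2) = 1 := by
    intro n
    show aN t s ((aN t s (Y n, H n))⁻¹ ^ t • Y n, (aN t s (Y n, H n))⁻¹ ^ s • H n) = 1
    rw [aN_smul t s ht hs (hμpos n)]
    exact inv_mul_cancel₀ (hYpos n).ne'
  have haNx : ∀ n, aN t s ((q n).1, (q n).2.2.1) ≤ 1 / ((n:ℝ)+1) := by
    intro n
    show aN t s ((aN t s (Y n, H n))⁻¹ ^ t • X n, (aN t s (Y n, H n))⁻¹ ^ s • Ξ n)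
      ≤ 1 / ((n:ℝ)+1)
    rw [aN_smul t s ht hs (hμpos n), inv_mul_eq_div,
      div_le_div_iff₀ (hYpos n) (by positivity : (0:ℝ) < (n:ℝ)+1)]
    nlinarith [hlt n, aN_nonneg t s (X n, Ξ n)]
  -- all q n in the closed unit ball
  have hq1 : ∀ n, q n ∈ Metric.closedBall
      (0 : EuclideanSpace ℝ (Fin d) × EuclideanSpace ℝ (Fin d) ×
        EuclideanSpace ℝ (Fin d) × EuclideanSpace ℝ (Fin d)) 1 := by
    intro n
    have hxle : aN t s ((q n).1, (q n).2.2.1) ≤ 1 :=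
      le_trans (haNx n) (by rw [div_le_one (by positivity)]; linarith [Nat.cast_nonneg (α := ℝ) n])
    have hyle : aN t s ((q n).2.1, (q n).2.2.2) ≤ 1 := le_of_eq (haNy n)
    have b1 : ‖(q n).1‖ ≤ 1 := by
      have := norm_fst_le_of_aN_le (s := s) ht hxle; rwa [Real.one_rpow] at this
    have b2 : ‖(q n).2.1‖ ≤ 1 := by
      have := norm_fst_le_of_aN_le (s := s) ht hyle; rwa [Real.one_rpow] at this
    have b3 : ‖(q n).2.2.1‖ ≤ 1 := by
      have := norm_snd_le_of_aN_le (t := t) hs hxle; rwa [Real.one_rpow] at this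
    have b4 : ‖(q n).2.2.2‖ ≤ 1 := by
      have := norm_snd_le_of_aN_le (t := t) hs hyle; rwa [Real.one_rpow] at this
    rw [Metric.mem_closedBall, dist_zero_right]
    simp only [Prod.norm_def, max_le_iff]
    exact ⟨b1, b2, b3, b4⟩
  obtain ⟨qL, -, φ, hφ, hconv⟩ := (isCompact_closedBall _ 1).tendsto_subseq hq1
  -- the limit is in WK ∪ {0}
  have hqLcl : qL ∈ closure WK :=
    mem_closure_of_tendsto hconv (Filter.Eventually.of_forall fun n => hqmem (φ n))
  -- (y,η)-part of the limit has aN = 1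
  have hGcont : Continuous (fun p : EuclideanSpace ℝ (Fin d) × EuclideanSpace ℝ (Fin d) ×
      EuclideanSpace ℝ (Fin d) × EuclideanSpace ℝ (Fin d) => aN t s (p.2.1, p.2.2.2)) :=
    (aN_continuous t s ht hs).comp
      ((continuous_fst.comp continuous_snd).prodMk
        (continuous_snd.comp (continuous_snd.comp continuous_snd)))
  have hFcont : Continuous (fun p : EuclideanSpace ℝ (Fin d) × EuclideanSpace ℝ (Fin d) ×
      EuclideanSpace ℝ (Fin d) × EuclideanSpace ℝ (Fin d) => aN t s (p.1, p.2.2.1)) :=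
    (aN_continuous t s ht hs).comp
      (continuous_fst.prodMk (continuous_fst.comp (continuous_snd.comp continuous_snd)))
  have hy1 : aN t s (qL.2.1, qL.2.2.2) = 1 := by
    have h1 : Filter.Tendsto (fun n => aN t s ((q (φ n)).2.1, (q (φ n)).2.2.2))
        Filter.atTop (nhds (aN t s (qL.2.1, qL.2.2.2))) :=
      (hGcont.continuousAt.tendsto).comp hconv
    have h2 : Filter.Tendsto (fun n => aN t s ((q (φ n)).2.1, (q (φ n)).2.2.2))
        Filter.atTop (nhds 1) := by
      simp only [haNy]; exact tendsto_const_nhds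
    exact tendsto_nhds_unique h1 h2
  have hx0 : aN t s (qL.1, qL.2.2.1) = 0 := by
    have h1 : Filter.Tendsto (fun n => aN t s ((q (φ n)).1, (q (φ n)).2.2.1))
        Filter.atTop (nhds (aN t s (qL.1, qL.2.2.1))) :=
      (hFcont.continuousAt.tendsto).comp hconv
    have h2 : Filter.Tendsto (fun n => aN t s ((q (φ n)).1, (q (φ n)).2.2.1))
        Filter.atTop (nhds 0) := by
      apply squeeze_zero (fun n => aN_nonneg _ _ _)
        (g := fun n : ℕ => 1 / ((n:ℝ)+1))
      · intro n
        refine le_trans (haNx (φ n)) ?_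
        have hn : (n:ℝ) ≤ (φ n : ℝ) := Nat.cast_le.mpr hφ.le_apply
        apply div_le_div_of_nonneg_left one_pos.le (by positivity)
        linarith
      · exact tendsto_one_div_add_atTop_nhds_zero_nat
    exact tendsto_nhds_unique h1 h2
  have hx00 : (qL.1, qL.2.2.1) = 0 := aN_eq_zero ht hs hx0
  have h1 : qL.1 = 0 := congrArg Prod.fst hx00
  have h2 : qL.2.2.1 = 0 := congrArg Prod.snd hx00
  have hyne : (qL.2.1, qL.2.2.2) ≠ 0 := by
    intro h
    rw [h] at hy1
    have : aN t s ((0,0) : EuclideanSpace ℝ (Fin d) × EuclideanSpace ℝ (Fin d)) = 0 := by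
      simp [aN, Real.zero_rpow (inv_ne_zero ht.ne'), Real.zero_rpow (inv_ne_zero hs.ne')]
    rw [show ((0:EuclideanSpace ℝ (Fin d) × EuclideanSpace ℝ (Fin d))) = ((0,0) : EuclideanSpace ℝ (Fin d) × EuclideanSpace ℝ (Fin d)) from rfl] at hy1
    rw [this] at hy1
    norm_num at hy1
  have hqLne : qL ≠ 0 := by
    intro h
    apply hyne
    rw [h]
    rfl
  have hqLWK : qL ∈ WK := by
    rcases hWKclosed hqLcl with h | h
    · exact h
    · exact absurd h hqLne
  -- contradiction with hWF2
  apply hWF2 qL.2.1 qL.2.2.2 hyne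
  have : qL = (0, qL.2.1, 0, qL.2.2.2) := by
    ext <;> simp [h1, h2]
  rwa [this] at hqLWK

/-- Abstract form of Lemma 5.2: let `W_K ⊆ ℝ^{4d} \ {0}` and `W_u ⊆ ℝ^{2d} \ {0}`
be closed (in the complement of the origin) and invariant under the anisotropic
scalings.  Assume `W_K` contains no nonzero point `(x,0,ξ,0)` nor `(0,y,0,η)`.
Then `W_K' ∘ W_u = {(x,ξ) : ∃(y,η) ∈ W_u, (x,y,ξ,−η) ∈ W_K}` is invariant under
`(x,ξ) ↦ (μ^t x, μ^s ξ)` and closed in `ℝ^{2d} \ {0}`. -/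
theorem stmt_12 {d : ℕ} (t s : ℝ) (ht : 0 < t) (hs : 0 < s) (hts : 1 < t + s)
    (WK : Set (EuclideanSpace ℝ (Fin d) × EuclideanSpace ℝ (Fin d) ×
      EuclideanSpace ℝ (Fin d) × EuclideanSpace ℝ (Fin d)))
    (Wu : Set (EuclideanSpace ℝ (Fin d) × EuclideanSpace ℝ (Fin d)))
    (hWK0 : ∀ z ∈ WK, z ≠ 0)
    (hWKclosed : closure WK ⊆ WK ∪ {0})
    (hWKconic : ∀ μ : ℝ, 0 < μ → ∀ x y ξ η : EuclideanSpace ℝ (Fin d),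
      (x, y, ξ, η) ∈ WK → (μ ^ t • x, μ ^ t • y, μ ^ s • ξ, μ ^ s • η) ∈ WK)
    (hWu0 : ∀ z ∈ Wu, z ≠ 0)
    (hWuclosed : closure Wu ⊆ Wu ∪ {0})
    (hWuconic : ∀ μ : ℝ, 0 < μ → ∀ y η : EuclideanSpace ℝ (Fin d),
      (y, η) ∈ Wu → (μ ^ t • y, μ ^ s • η) ∈ Wu)
    (hWF1 : ∀ x ξ : EuclideanSpace ℝ (Fin d), (x, ξ) ≠ 0 → (x, 0, ξ, 0) ∉ WK)
    (hWF2 : ∀ y η : EuclideanSpace ℝ (Fin d), (y, η) ≠ 0 → (0, y, 0, η) ∉ WK) :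
    (∀ μ : ℝ, 0 < μ → ∀ x ξ : EuclideanSpace ℝ (Fin d),
      (x, ξ) ∈ {z : EuclideanSpace ℝ (Fin d) × EuclideanSpace ℝ (Fin d) |
        ∃ y η, (y, η) ∈ Wu ∧ (z.1, y, z.2, -η) ∈ WK} →
      (μ ^ t • x, μ ^ s • ξ) ∈ {z : EuclideanSpace ℝ (Fin d) × EuclideanSpace ℝ (Fin d) |
        ∃ y η, (y, η) ∈ Wu ∧ (z.1, y, z.2, -η) ∈ WK}) ∧
    closure {z : EuclideanSpace ℝ (Fin d) × EuclideanSpace ℝ (Fin d) |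
        ∃ y η, (y, η) ∈ Wu ∧ (z.1, y, z.2, -η) ∈ WK} ⊆
      {z : EuclideanSpace ℝ (Fin d) × EuclideanSpace ℝ (Fin d) |
        ∃ y η, (y, η) ∈ Wu ∧ (z.1, y, z.2, -η) ∈ WK} ∪ {0} := by
  constructor
  · rintro μ hμ x ξ ⟨y, η, hyη, hK⟩
    refine ⟨μ ^ t • y, μ ^ s • η, hWuconic μ hμ y η hyη, ?_⟩
    have := hWKconic μ hμ x y ξ (-η) hK
    simpa using this
  · intro z hz
    rcases eq_or_ne z 0 with rfl | hzne
    · exact Or.inr rfl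
    left
    obtain ⟨c, hc, hbd⟩ := key_bound t s ht hs WK hWKclosed hWKconic hWF2
    obtain ⟨u, hu, huz⟩ := mem_closure_iff_seq_limit.mp hz
    choose Y H hYH hK using hu
    -- the aN of u n is bounded
    have haNu : Filter.Tendsto (fun n => aN t s (u n)) Filter.atTop (nhds (aN t s z)) :=
      ((aN_continuous t s ht hs).continuousAt.tendsto).comp huz
    obtain ⟨R, hR⟩ := haNu.bddAbove_range
    have hR' : ∀ n, aN t s (u n) ≤ R := fun n => hR (Set.mem_range_self n)
    have hRnn : 0 ≤ R := le_trans (aN_nonneg t s (u 0)) (hR' 0)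
    -- aN of (Y n, H n) bounded by c * R
    have hYHbd : ∀ n, aN t s (Y n, H n) ≤ c * R := by
      intro n
      have h1 := hbd (u n).1 (Y n) (u n).2 (-(H n)) (hK n)
      have h2 : aN t s (Y n, -(H n)) = aN t s (Y n, H n) := by simp [aN]
      have h3 : ((u n).1, (u n).2) = u n := rfl
      rw [h2, h3] at h1
      exact le_trans h1 (mul_le_mul_of_nonneg_left (hR' n) hc.le)
    -- so (Y n, H n) lies in a compact ball
    set R' : ℝ := max ((c*R) ^ t) ((c*R) ^ s) with hR'def
    have hball : ∀ n, (Y n, H n) ∈ Metric.closedBall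
        (0 : EuclideanSpace ℝ (Fin d) × EuclideanSpace ℝ (Fin d)) R' := by
      intro n
      rw [Metric.mem_closedBall, dist_zero_right]
      simp only [Prod.norm_def, max_le_iff]
      constructor
      · exact le_trans (norm_fst_le_of_aN_le (s := s) ht (hYHbd n)) (le_max_left _ _)
      · exact le_trans (norm_snd_le_of_aN_le (t := t) hs (hYHbd n)) (le_max_right _ _)
    obtain ⟨w, -, φ, hφ, hconv⟩ := (isCompact_closedBall _ R').tendsto_subseq hball
    -- the limit of the WK points
    have huφ : Filter.Tendsto (fun n => u (φ n)) Filter.atTop (nhds z) :=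
      huz.comp hφ.tendsto_atTop
    have hYφ : Filter.Tendsto (fun n => Y (φ n)) Filter.atTop (nhds w.1) :=
      ((continuous_fst.continuousAt).tendsto).comp hconv
    have hHφ : Filter.Tendsto (fun n => H (φ n)) Filter.atTop (nhds w.2) :=
      ((continuous_snd.continuousAt).tendsto).comp hconv
    have hPconv : Filter.Tendsto
        (fun n => ((u (φ n)).1, Y (φ n), (u (φ n)).2, -(H (φ n))))
        Filter.atTop (nhds (z.1, w.1, z.2, -w.2)) :=
      by
        have hu1 : Filter.Tendsto (fun n => (u (φ n)).1) Filter.atTop (nhds z.1) :=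
          (continuous_fst.continuousAt.tendsto).comp huφ
        have hu2 : Filter.Tendsto (fun n => (u (φ n)).2) Filter.atTop (nhds z.2) :=
          (continuous_snd.continuousAt.tendsto).comp huφ
        exact hu1.prodMk_nhds (hYφ.prodMk_nhds (hu2.prodMk_nhds hHφ.neg))
    have hPcl : (z.1, w.1, z.2, -w.2) ∈ closure WK :=
      mem_closure_of_tendsto hPconv (Filter.Eventually.of_forall fun n => hK (φ n))
    have hPne : ((z.1, w.1, z.2, -w.2) :
        EuclideanSpace ℝ (Fin d) × EuclideanSpace ℝ (Fin d) ×
        EuclideanSpace ℝ (Fin d) × EuclideanSpace ℝ (Fin d)) ≠ 0 := by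
      intro h
      apply hzne
      have h1 : z.1 = 0 := congrArg Prod.fst h
      have h2 : z.2 = 0 := congrArg (fun p => p.2.2.1) h
      exact Prod.ext h1 h2
    have hPWK : (z.1, w.1, z.2, -w.2) ∈ WK := by
      rcases hWKclosed hPcl with h | h
      · exact h
      · exact absurd h hPne
    -- w ≠ 0 by hWF1
    have hwne : w ≠ 0 := by
      rintro rfl
      have : ((0:EuclideanSpace ℝ (Fin d)), (0:EuclideanSpace ℝ (Fin d))).1 = (0:EuclideanSpace ℝ (Fin d)) := rfl
      have h0 : (z.1, (0:EuclideanSpace ℝ (Fin d)), z.2,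
          (0:EuclideanSpace ℝ (Fin d))) ∈ WK := by
        simpa using hPWK
      exact hWF1 z.1 z.2 hzne h0
    -- w ∈ Wu
    have hwWu : w ∈ Wu := by
      have hwcl : w ∈ closure Wu :=
        mem_closure_of_tendsto hconv (Filter.Eventually.of_forall fun n => hYH (φ n))
      rcases hWuclosed hwcl with h | h
      · exact h
      · exact absurd h hwne
    exact ⟨w.1, w.2, by rwa [Prod.mk.eta], hPWK⟩
end
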